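/- In the Hilbert space L²(S¹) with the orthogonal projection 𝒫 onto the Hardy space H²(𝒰) (the closed span of {zⁿ : n ≥ 0}), for x ∈ ℂ with |x| < 1 the multiplication operator by f_x(z) = z^(−1)(1 − x z^(−1))^(−1) satisfies (1−𝒫) f_x 𝒫 = |ξ_x⟩⟨η_x|, the rank-one operator with ξ_x(z) = z^(−1)(1 − x z^(−1))^(−1) and η_x(z) = (1 − conj(x) z)^(−1). -/

import Mathlib

open Complex MeasureTheory Real

instance : Fact (0 < 2 * Real.pi) := ⟨Real.two_pi_pos⟩

/-- The Hardy space `H²(𝒰)` inside `L²(S¹)`: the closed span of the Fourier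
monomials `zⁿ`, `n ≥ 0`. -/
noncomputable def hardySubmodule :
    Submodule ℂ (Lp ℂ 2 (@AddCircle.haarAddCircle (2 * Real.pi) _)) :=
  (Submodule.span ℂ (Set.range fun n : ℕ => fourierLp 2 (n : ℤ))).topologicalClosure

noncomputable instance : CompleteSpace hardySubmodule :=
  (Submodule.isClosed_topologicalClosure _).completeSpace_coe

/-- The orthogonal projection `𝒫` of `L²(S¹)` onto the Hardy space. -/
noncomputable def hardyProj :
    Lp ℂ 2 (@AddCircle.haarAddCircle (2 * Real.pi) _) →L[ℂ] hardySubmodule :=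
  Submodule.orthogonalProjectionOnto hardySubmodule

open AddCircle Filter

set_option linter.unusedSectionVars false

section Helpers

variable {T : ℝ} [hT : Fact (0 < T)]

lemma myNormFourier (n : ℤ) (t : AddCircle T) : ‖fourier n t‖ = 1 := Circle.norm_coe _

lemma myFourierNegOnePow (k : ℕ) (t : AddCircle T) :
    (fourier (-1) t) ^ k = fourier (-(k : ℤ)) t := by
  induction k with
  | zero => simp [fourier_zero]
  | succ k ih =>
      rw [pow_succ, ih, ← fourier_add]
      congr 1
      push_cast
      ring

lemma myIntegrableLp2 (f : Lp ℂ 2 (@haarAddCircle T hT)) :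
    Integrable (f : AddCircle T → ℂ) haarAddCircle :=
  (Lp.memLp f).integrable (by norm_num)

lemma myFourierCoeffOne (m : ℤ) :
    fourierCoeff (fun _ : AddCircle T => (1 : ℂ)) m = if m = 0 then 1 else 0 := by
  simp only [fourierCoeff, smul_eq_mul, mul_one]
  split_ifs with h
  · subst h
    simp only [neg_zero]
    have : (fun t : AddCircle T => fourier 0 t) = fun _ => (1 : ℂ) := by
      ext t; exact fourier_zero
    rw [this, integral_const, probReal_univ, one_smul]
  · exact integral_eq_zero_of_add_right_eq_neg
      (fourier_add_half_inv_index (neg_ne_zero.mpr h) hT.elim)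

lemma myNormFourierCoeffLe (f : AddCircle T → ℂ) (n : ℤ) :
    ‖fourierCoeff f n‖ ≤ ∫ t, ‖f t‖ ∂(@haarAddCircle T hT) := by
  refine (norm_integral_le_integral_norm _).trans_eq ?_
  congr 1
  ext t
  rw [norm_smul, myNormFourier, one_mul]

/-- Key expansion lemma: Fourier coefficients of `(1 - x z⁻¹)⁻¹ f`. -/
lemma myKey (x : ℂ) (hx : ‖x‖ < 1) {f : AddCircle T → ℂ}
    (hf : Integrable f (@haarAddCircle T hT)) (n : ℤ) :
    fourierCoeff (fun t => (1 - x * fourier (-1) t)⁻¹ * f t) n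
      = ∑' k : ℕ, x ^ k * fourierCoeff f (n + k) := by
  have hxt : ∀ t : AddCircle T, ‖x * fourier (-1) t‖ < 1 := by
    intro t
    rw [norm_mul, myNormFourier, mul_one]
    exact hx
  have hpt : ∀ t : AddCircle T, fourier (-n) t • ((1 - x * fourier (-1) t)⁻¹ * f t)
      = ∑' k : ℕ, x ^ k * (fourier (-(n + k)) t * f t) := by
    intro t
    rw [smul_eq_mul, ← tsum_geometric_of_norm_lt_one (hxt t), ← tsum_mul_right, ← tsum_mul_left]
    refine tsum_congr fun k => ?_
    rw [mul_pow, myFourierNegOnePow]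
    have h2 : fourier (-(n + (k : ℤ))) t = fourier (-n) t * fourier (-(k : ℤ)) t := by
      rw [← fourier_add]; congr 1; ring
    rw [h2]; ring
  have hint : ∀ k : ℕ, Integrable (fun t => x ^ k * (fourier (-(n + k)) t * f t))
      (@haarAddCircle T hT) := by
    intro k
    exact ((hf.bdd_mul (map_continuous (fourier (-(n + k)))).aestronglyMeasurable
      (Filter.Eventually.of_forall fun t => le_of_eq (myNormFourier _ t))).const_mul _)
  have hsum : Summable fun k : ℕ =>
      ∫ t, ‖x ^ k * (fourier (-(n + k)) t * f t)‖ ∂(@haarAddCircle T hT) := by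
    have heq : ∀ k : ℕ, (∫ t, ‖x ^ k * (fourier (-(n + k)) t * f t)‖ ∂(@haarAddCircle T hT))
        = ‖x‖ ^ k * ∫ t, ‖f t‖ ∂(@haarAddCircle T hT) := by
      intro k
      rw [← integral_const_mul]
      congr 1
      ext t
      rw [norm_mul, norm_mul, myNormFourier, one_mul, norm_pow]
    simp only [heq]
    exact (summable_geometric_of_lt_one (norm_nonneg _)
      (by exact hx)).mul_right _
  have swap := integral_tsum_of_summable_integral_norm hint hsum
  calc fourierCoeff (fun t => (1 - x * fourier (-1) t)⁻¹ * f t) n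
      = ∫ t, ∑' k : ℕ, x ^ k * (fourier (-(n + k)) t * f t) ∂(@haarAddCircle T hT) := by
        rw [fourierCoeff]
        exact integral_congr_ae (Filter.Eventually.of_forall hpt)
    _ = ∑' k : ℕ, ∫ t, x ^ k * (fourier (-(n + k)) t * f t) ∂(@haarAddCircle T hT) := swap.symm
    _ = ∑' k : ℕ, x ^ k * fourierCoeff f (n + k) := by
        refine tsum_congr fun k => ?_
        rw [integral_const_mul]
        simp only [fourierCoeff, smul_eq_mul]

lemma myShift (f : AddCircle T → ℂ) (m : ℤ) :
    fourierCoeff (fun t => fourier (-1) t * f t) m = fourierCoeff f (m + 1) := by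
  rw [fourierCoeff, fourierCoeff]
  congr 1
  ext t
  rw [smul_eq_mul, smul_eq_mul, ← mul_assoc, ← fourier_add]
  congr 2
  ring

end Helpers

section HardyHelpers

open AddCircle Filter

local notation "EE" => Lp ℂ 2 (@AddCircle.haarAddCircle (2 * Real.pi) _)

lemma myInnerFourierLp (i : ℤ) (f : EE) :
    (inner ℂ (fourierLp 2 i) f : ℂ) = fourierCoeff (f : AddCircle (2 * Real.pi) → ℂ) i := by
  rw [← fourierBasis_repr, fourierBasis.repr_apply_apply, coe_fourierBasis]

lemma myFourierLpMemHardy {n : ℤ} (hn : 0 ≤ n) : fourierLp 2 n ∈ hardySubmodule := by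
  apply Submodule.le_topologicalClosure
  apply Submodule.subset_span
  exact ⟨n.toNat, by dsimp only; rw [Int.toNat_of_nonneg hn]⟩

lemma myMemOrth (v : EE) (h : ∀ n : ℕ, (inner ℂ (fourierLp 2 (n : ℤ)) v : ℂ) = 0) :
    v ∈ hardySubmoduleᗮ := by
  rw [Submodule.mem_orthogonal]
  intro u hu
  have hle : hardySubmodule ≤ (ℂ ∙ v)ᗮ := by
    refine Submodule.topologicalClosure_minimal _ ?_ (Submodule.isClosed_orthogonal _)
    rw [Submodule.span_le]
    rintro _ ⟨n, rfl⟩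
    rw [SetLike.mem_coe, Submodule.mem_orthogonal_singleton_iff_inner_right]
    rw [← inner_eq_zero_symm]
    exact h n
  have h2 := hle hu
  rw [Submodule.mem_orthogonal_singleton_iff_inner_right] at h2
  rwa [inner_eq_zero_symm]

lemma myCoeffZeroOfMem (g : EE) (hg : g ∈ hardySubmodule) {m : ℤ} (hm : m < 0) :
    (inner ℂ (fourierLp 2 m) g : ℂ) = 0 := by
  have hle : hardySubmodule ≤ (ℂ ∙ (fourierLp 2 m : EE))ᗮ := by
    refine Submodule.topologicalClosure_minimal _ ?_ (Submodule.isClosed_orthogonal _)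
    rw [Submodule.span_le]
    rintro _ ⟨n, rfl⟩
    rw [SetLike.mem_coe, Submodule.mem_orthogonal_singleton_iff_inner_right]
    have := orthonormal_iff_ite.mp (@orthonormal_fourier (2 * Real.pi) _) m (n : ℤ)
    rw [this, if_neg (by omega)]
  have h2 := hle hg
  rwa [Submodule.mem_orthogonal_singleton_iff_inner_right] at h2

lemma myMemHardy (v : EE) (h : ∀ m : ℤ, m < 0 → (inner ℂ (fourierLp 2 m) v : ℂ) = 0) :
    v ∈ hardySubmodule := by
  have hs := fourierBasis.hasSum_repr v
  have hcl : IsClosed (hardySubmodule : Set EE) := Submodule.isClosed_topologicalClosure _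
  refine hcl.mem_of_tendsto hs (Eventually.of_forall fun s => ?_)
  refine Submodule.sum_mem _ fun i _ => ?_
  by_cases hi : i < 0
  · have hz : fourierBasis.repr v i = 0 := by
      rw [fourierBasis.repr_apply_apply, coe_fourierBasis]
      exact h i hi
    rw [hz, zero_smul]
    exact Submodule.zero_mem _
  · push_neg at hi
    refine Submodule.smul_mem _ _ ?_
    have : (fourierBasis i : EE) = fourierLp 2 i := by rw [coe_fourierBasis]
    rw [this]
    exact myFourierLpMemHardy hi

lemma myCoeff0 {T : ℝ} [hT : Fact (0 < T)] (g : AddCircle T → ℂ) :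
    fourierCoeff g 0 = ∫ t, g t ∂(@AddCircle.haarAddCircle T hT) := by
  rw [fourierCoeff]
  refine integral_congr_ae (Eventually.of_forall fun t => ?_)
  dsimp only
  rw [neg_zero, fourier_zero, one_smul]

lemma myCoeffCongr {T : ℝ} [hT : Fact (0 < T)] {f g : AddCircle T → ℂ}
    (h : f =ᵐ[@AddCircle.haarAddCircle T hT] g) (n : ℤ) :
    fourierCoeff f n = fourierCoeff g n := by
  rw [fourierCoeff, fourierCoeff]
  exact integral_congr_ae (h.mono fun t ht => by dsimp only; rw [ht])

end HardyHelpers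


theorem stmt9 (x : ℂ) (hx : ‖x‖ < 1)
    (φ ρ ξ η : Lp ℂ 2 (@AddCircle.haarAddCircle (2 * Real.pi) _))
    (hρ : (ρ : AddCircle (2 * Real.pi) → ℂ) =ᵐ[AddCircle.haarAddCircle]
      fun t => (fourier (-1) t) * (1 - x * fourier (-1) t)⁻¹ *
        ((hardyProj φ : Lp ℂ 2 (@AddCircle.haarAddCircle (2 * Real.pi) _)) t))
    (hξ : (ξ : AddCircle (2 * Real.pi) → ℂ) =ᵐ[AddCircle.haarAddCircle]
      fun t => (fourier (-1) t) * (1 - x * fourier (-1) t)⁻¹)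
    (hη : (η : AddCircle (2 * Real.pi) → ℂ) =ᵐ[AddCircle.haarAddCircle]
      fun t => (1 - (starRingEnd ℂ) x * fourier 1 t)⁻¹) :
    ρ - (hardyProj ρ : Lp ℂ 2 (@AddCircle.haarAddCircle (2 * Real.pi) _)) =
      (inner ℂ η φ : ℂ) • ξ := by
  classical
  set ψ : Lp ℂ 2 (@AddCircle.haarAddCircle (2 * Real.pi) _) :=
    (hardyProj φ : Lp ℂ 2 (@AddCircle.haarAddCircle (2 * Real.pi) _)) with hψdef
  have hψint : Integrable (ψ : AddCircle (2 * Real.pi) → ℂ) AddCircle.haarAddCircle :=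
    myIntegrableLp2 ψ
  have hφint : Integrable (φ : AddCircle (2 * Real.pi) → ℂ) AddCircle.haarAddCircle :=
    myIntegrableLp2 φ
  -- negative Fourier coefficients of ψ vanish
  have h1 : ∀ m : ℤ, m < 0 → fourierCoeff (ψ : AddCircle (2 * Real.pi) → ℂ) m = 0 := by
    intro m hm
    rw [← myInnerFourierLp]
    exact myCoeffZeroOfMem ψ (hardyProj φ).2 hm
  -- nonnegative Fourier coefficients of φ and ψ agree
  have h2 : ∀ j : ℤ, 0 ≤ j → fourierCoeff (φ : AddCircle (2 * Real.pi) → ℂ) j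
      = fourierCoeff (ψ : AddCircle (2 * Real.pi) → ℂ) j := by
    intro j hj
    have horth : φ - ψ ∈ hardySubmoduleᗮ :=
      Submodule.sub_starProjection_mem_orthogonal (K := hardySubmodule) φ
    rw [Submodule.mem_orthogonal] at horth
    have h0 := horth _ (myFourierLpMemHardy hj)
    rw [inner_sub_right, sub_eq_zero, myInnerFourierLp, myInnerFourierLp] at h0
    exact h0
  -- Fourier coefficients of ρ
  have hρ2 : ∀ n : ℤ, fourierCoeff (ρ : AddCircle (2 * Real.pi) → ℂ) n
      = ∑' k : ℕ, x ^ k * fourierCoeff (ψ : AddCircle (2 * Real.pi) → ℂ) (n + k + 1) := by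
    intro n
    have e1 : fourierCoeff (ρ : AddCircle (2 * Real.pi) → ℂ) n
        = fourierCoeff (fun t => (1 - x * fourier (-1) t)⁻¹ *
            (fourier (-1) t * (ψ : AddCircle (2 * Real.pi) → ℂ) t)) n := by
      refine myCoeffCongr (hρ.trans (Filter.Eventually.of_forall fun t => ?_)) n
      ring
    rw [e1, myKey x hx (hψint.bdd_mul (map_continuous (fourier (-1))).aestronglyMeasurable
      (Filter.Eventually.of_forall fun t => le_of_eq (myNormFourier _ t))) n]
    refine tsum_congr fun k => ?_
    rw [myShift]
  -- Fourier coefficients of ξ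
  have hξ2 : ∀ n : ℤ, fourierCoeff (ξ : AddCircle (2 * Real.pi) → ℂ) n
      = ∑' k : ℕ, x ^ k * (if n + k + 1 = 0 then (1 : ℂ) else 0) := by
    intro n
    have e1 : fourierCoeff (ξ : AddCircle (2 * Real.pi) → ℂ) n
        = fourierCoeff (fun t => (1 - x * fourier (-1) t)⁻¹ *
            (fourier (-1) t * (fun _ : AddCircle (2 * Real.pi) => (1 : ℂ)) t)) n := by
      refine myCoeffCongr (hξ.trans (Filter.Eventually.of_forall fun t => ?_)) n
      simp only []
      ring
    rw [e1, myKey x hx ((integrable_const (1 : ℂ)).bdd_mul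
      (map_continuous (fourier (-1))).aestronglyMeasurable
      (Filter.Eventually.of_forall fun t => le_of_eq (myNormFourier _ t))) n]
    refine tsum_congr fun k => ?_
    rw [myShift (fun _ : AddCircle (2 * Real.pi) => (1 : ℂ)), myFourierCoeffOne]
  have hξ0 : ∀ n : ℤ, 0 ≤ n → fourierCoeff (ξ : AddCircle (2 * Real.pi) → ℂ) n = 0 := by
    intro n hn
    rw [hξ2 n]
    have hz : ∀ k : ℕ, x ^ k * (if n + k + 1 = 0 then (1 : ℂ) else 0) = 0 := by
      intro k
      rw [if_neg (by omega), mul_zero]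
    calc ∑' k : ℕ, x ^ k * (if n + k + 1 = 0 then (1 : ℂ) else 0)
        = ∑' _ : ℕ, (0 : ℂ) := tsum_congr hz
      _ = 0 := tsum_zero
  have hξneg : ∀ j : ℕ, fourierCoeff (ξ : AddCircle (2 * Real.pi) → ℂ) (-(j : ℤ) - 1) = x ^ j := by
    intro j
    rw [hξ2]
    rw [tsum_eq_single j (fun k hk => by rw [if_neg (by omega), mul_zero])]
    rw [if_pos (by push_cast; ring), mul_one]
  -- summability helper
  have hbound : ∀ m : ℕ → ℤ, Summable fun k : ℕ =>
      x ^ k * fourierCoeff (ψ : AddCircle (2 * Real.pi) → ℂ) (m k) := by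
    intro m
    refine Summable.of_norm_bounded (g := fun k => ‖x‖ ^ k * ∫ t, ‖(ψ : AddCircle (2 * Real.pi) → ℂ) t‖ ∂AddCircle.haarAddCircle)
      ((summable_geometric_of_lt_one (norm_nonneg _)
        (by exact hx)).mul_right _) fun k => ?_
    rw [norm_mul, norm_pow]
    exact mul_le_mul_of_nonneg_left (myNormFourierCoeffLe _ _) (pow_nonneg (norm_nonneg _) _)
  -- negative Fourier coefficients of ρ
  have hρneg : ∀ j : ℕ, fourierCoeff (ρ : AddCircle (2 * Real.pi) → ℂ) (-(j : ℤ) - 1)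
      = x ^ j * ∑' i : ℕ, x ^ i * fourierCoeff (ψ : AddCircle (2 * Real.pi) → ℂ) i := by
    intro j
    rw [hρ2]
    have hsummf := hbound fun k => -(j : ℤ) - 1 + k + 1
    rw [← Summable.sum_add_tsum_nat_add j hsummf]
    have hz : ∑ i ∈ Finset.range j,
        x ^ i * fourierCoeff (ψ : AddCircle (2 * Real.pi) → ℂ) (-(j : ℤ) - 1 + i + 1) = 0 := by
      refine Finset.sum_eq_zero fun i hi => ?_
      rw [Finset.mem_range] at hi
      rw [h1 _ (by omega), mul_zero]
    rw [hz, zero_add, ← tsum_mul_left]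
    refine tsum_congr fun i => ?_
    have harg : (-(j : ℤ) - 1 + ↑(i + j) + 1) = i := by push_cast; ring
    rw [harg, pow_add]
    ring
  -- the inner product
  have hc : (inner ℂ η φ : ℂ) = ∑' i : ℕ, x ^ i *
      fourierCoeff (ψ : AddCircle (2 * Real.pi) → ℂ) i := by
    rw [MeasureTheory.L2.inner_def]
    have e1 : ∫ t, (inner ℂ ((η : AddCircle (2 * Real.pi) → ℂ) t)
          ((φ : AddCircle (2 * Real.pi) → ℂ) t) : ℂ) ∂AddCircle.haarAddCircle
        = ∫ t, (1 - x * fourier (-1) t)⁻¹ *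
            (φ : AddCircle (2 * Real.pi) → ℂ) t ∂AddCircle.haarAddCircle := by
      refine integral_congr_ae ?_
      filter_upwards [hη] with t ht
      rw [RCLike.inner_apply', ht, map_inv₀, map_sub, map_one, map_mul, Complex.conj_conj,
        ← fourier_neg]
    rw [e1, ← myCoeff0, myKey x hx hφint 0]
    refine tsum_congr fun i => ?_
    rw [zero_add, h2 _ (Int.natCast_nonneg i)]
  -- memberships
  have hmem2 : (inner ℂ η φ : ℂ) • ξ ∈ hardySubmoduleᗮ := by
    refine Submodule.smul_mem _ _ (myMemOrth ξ fun n => ?_)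
    rw [myInnerFourierLp]
    exact hξ0 _ (Int.natCast_nonneg n)
  have hmem1 : ρ - (inner ℂ η φ : ℂ) • ξ ∈ hardySubmodule := by
    refine myMemHardy _ fun m hm => ?_
    obtain ⟨j, rfl⟩ : ∃ j : ℕ, m = -(j : ℤ) - 1 := ⟨(-m - 1).toNat, by omega⟩
    rw [inner_sub_right, inner_smul_right, myInnerFourierLp, myInnerFourierLp,
      hρneg j, hξneg j, hc]
    ring
  have hproj : ((hardyProj ρ : hardySubmodule) :
      Lp ℂ 2 (@AddCircle.haarAddCircle (2 * Real.pi) _)) = ρ - (inner ℂ η φ : ℂ) • ξ := by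
    refine Submodule.eq_starProjection_of_mem_orthogonal' hmem1 hmem2 ?_
    rw [sub_add_cancel]
  rw [hproj, sub_sub_cancel]
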